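/- Let p ≥ 2, let f : ℝ^d → ℝ be differentiable and L-smooth w.r.t. ‖·‖_p, let y ∈ ℝ^d, and let x⁺ be a minimizer over x ∈ ℝ^d of the map x ↦ ⟨∇f(y), x − y⟩ + L‖x − y‖_p². Then ‖∇f(x⁺)‖_{p*} ≤ 3L‖x⁺ − y‖_p; consequently L‖x⁺ − y‖_p² ≥ (1/(9L))‖∇f(x⁺)‖_{p*}². -/

import Mathlib

open scoped BigOperators
open scoped InnerProductSpace

/-- The `ℓ_p` "norm" on `ℝ^d` for a real exponent `p`. -/
noncomputable def pnorm (p : ℝ) {d : ℕ} (x : EuclideanSpace ℝ (Fin d)) : ℝ :=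
  (∑ i, |x i| ^ p) ^ (1 / p)

/-- The dual exponent `p* = p/(p-1)`, so that `1/p + 1/p* = 1`. -/
noncomputable def dualExp (p : ℝ) : ℝ := p / (p - 1)

/-!
Write `g = ∇f(y)`, `r = ‖x⁺ - y‖_p` and `q = p*`. Testing the minimality of `x⁺` against
`y - c v`, where `‖v‖_p ≤ 1` and `⟨g, v⟩ = ‖g‖_q` and `c = ‖g‖_q / (2L)`, and
bounding `⟨g, x⁺ - y⟩ ≥ -‖g‖_q r` by Hölder, gives `L (r - c)² ≤ 0`, so `‖g‖_q = 2 L r`.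
Then `‖∇f(x⁺)‖_q ≤ ‖∇f(x⁺) - g‖_q + ‖g‖_q ≤ L r + 2 L r` by smoothness.
-/

lemma holderConjugate_dualExp {p : ℝ} (hp : 1 < p) : p.HolderConjugate (dualExp p) :=
  Real.HolderConjugate.conjExponent hp

section Pnorm

variable {d : ℕ}

lemma real_inner_eq_sum_mul (x y : EuclideanSpace ℝ (Fin d)) : ⟪x, y⟫_ℝ = ∑ i, x i * y i := by
  simp [PiLp.inner_apply, mul_comm]

lemma pnorm_nonneg (p : ℝ) (x : EuclideanSpace ℝ (Fin d)) : 0 ≤ pnorm p x :=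
  Real.rpow_nonneg (Finset.sum_nonneg fun _ _ => Real.rpow_nonneg (abs_nonneg _) _) _

lemma pnorm_zero {p : ℝ} (hp : 0 < p) : pnorm p (0 : EuclideanSpace ℝ (Fin d)) = 0 := by
  simp [pnorm, Real.zero_rpow hp.ne', Real.zero_rpow (inv_ne_zero hp.ne')]

lemma pnorm_neg (p : ℝ) (x : EuclideanSpace ℝ (Fin d)) : pnorm p (-x) = pnorm p x := by
  simp [pnorm]

lemma pnorm_smul {p : ℝ} (hp : 0 < p) (c : ℝ) (x : EuclideanSpace ℝ (Fin d)) :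
    pnorm p (c • x) = |c| * pnorm p x := by
  have hcoord : ∀ i, |(c • x) i| ^ p = |c| ^ p * |x i| ^ p := fun i => by
    rw [PiLp.smul_apply, smul_eq_mul, abs_mul, Real.mul_rpow (abs_nonneg _) (abs_nonneg _)]
  rw [pnorm, Finset.sum_congr rfl fun i _ => hcoord i, ← Finset.mul_sum,
    Real.mul_rpow (by positivity) (Finset.sum_nonneg fun _ _ => by positivity),
    ← Real.rpow_mul (abs_nonneg c), mul_one_div_cancel hp.ne', Real.rpow_one, pnorm]

lemma pnorm_add_le {p : ℝ} (hp : 1 ≤ p) (x y : EuclideanSpace ℝ (Fin d)) :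
    pnorm p (x + y) ≤ pnorm p x + pnorm p y :=
  Real.Lp_add_le Finset.univ (fun i => x i) (fun i => y i) hp

lemma inner_le_pnorm_mul_pnorm {p q : ℝ} (hqp : q.HolderConjugate p)
    (u v : EuclideanSpace ℝ (Fin d)) : ⟪u, v⟫_ℝ ≤ pnorm q u * pnorm p v := by
  rw [real_inner_eq_sum_mul]
  exact Real.inner_le_Lp_mul_Lq Finset.univ (fun i => u i) (fun i => v i) hqp

/-- The norming vector is `u |u|^(q-2)`, rescaled to unit `ℓ_p` norm. -/
lemma exists_pnorm_le_one_inner_eq {p q : ℝ} (hpq : p.HolderConjugate q)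
    (u : EuclideanSpace ℝ (Fin d)) :
    ∃ v : EuclideanSpace ℝ (Fin d), pnorm p v ≤ 1 ∧ ⟪u, v⟫_ℝ = pnorm q u := by
  set S : ℝ := ∑ i, |u i| ^ q
  have hq : 1 < q := hpq.symm.lt
  rcases (Finset.sum_nonneg fun i _ => Real.rpow_nonneg (abs_nonneg (u i)) q).eq_or_lt with
    hS0 | hSpos
  · refine ⟨0, by rw [pnorm_zero hpq.pos]; exact zero_le_one, ?_⟩
    rw [inner_zero_right, pnorm, ← hS0, Real.zero_rpow (one_div_pos.2 hpq.symm.pos).ne']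
  set w : EuclideanSpace ℝ (Fin d) := WithLp.toLp 2 fun i => u i * |u i| ^ (q - 2)
  have hw_mul : ∀ i, u i * w i = |u i| ^ q := fun i => by
    calc u i * w i = |u i| ^ (2 : ℝ) * |u i| ^ (q - 2) := by
          rw [Real.rpow_two, sq_abs]; simp only [w]; ring
      _ = |u i| ^ q := by
          rw [← Real.rpow_add' (abs_nonneg _) (by linarith)]; ring_nf
  have hw_abs : ∀ i, |w i| ^ p = |u i| ^ q := fun i => by
    have : |w i| = |u i| ^ (q - 1) := by
      simp only [w]
      rw [abs_mul, abs_of_nonneg (Real.rpow_nonneg (abs_nonneg _) _),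
        ← Real.rpow_one_add' (abs_nonneg _) (by linarith)]
      ring_nf
    rw [this, ← Real.rpow_mul (abs_nonneg _), hpq.symm.sub_one_mul_conj]
  have hw_pnorm : pnorm p w = S ^ (1 / p) := by
    rw [pnorm, Finset.sum_congr rfl fun i _ => hw_abs i]
  have hw_inner : ⟪u, w⟫_ℝ = S := by
    rw [real_inner_eq_sum_mul]; exact Finset.sum_congr rfl fun i _ => hw_mul i
  have hSp : 0 < S ^ (1 / p) := by positivity
  refine ⟨(S ^ (1 / p))⁻¹ • w, ?_, ?_⟩
  · rw [pnorm_smul hpq.pos, hw_pnorm, abs_of_pos (inv_pos.2 hSp), inv_mul_cancel₀ hSp.ne']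
  · rw [real_inner_smul_right, hw_inner, pnorm, inv_mul_eq_iff_eq_mul₀ hSp.ne',
      ← Real.rpow_add hSpos, one_div, one_div, hpq.inv_add_inv_eq_one, Real.rpow_one]

lemma pnorm_eq_two_mul_pnorm_of_isMinimizer {p q L : ℝ} (hpq : p.HolderConjugate q) (hL : 0 < L)
    {g z₀ : EuclideanSpace ℝ (Fin d)}
    (hmin : ∀ z, ⟪g, z₀⟫_ℝ + L * pnorm p z₀ ^ 2 ≤ ⟪g, z⟫_ℝ + L * pnorm p z ^ 2) :
    pnorm q g = 2 * L * pnorm p z₀ := by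
  obtain ⟨v, hv_le, hv_inner⟩ := exists_pnorm_le_one_inner_eq hpq g
  set r := pnorm p z₀
  set G := pnorm q g
  set c := G / (2 * L)
  have hc : 0 ≤ c := div_nonneg (pnorm_nonneg _ _) (by positivity)
  have hGc : G = 2 * L * c := (mul_div_cancel₀ G (by positivity : 2 * L ≠ 0)).symm
  have hholder : -(G * r) ≤ ⟪g, z₀⟫_ℝ := by
    have := inner_le_pnorm_mul_pnorm hpq.symm g (-z₀)
    rw [inner_neg_right, pnorm_neg] at this
    linarith
  have htest : ⟪g, -(c • v)⟫_ℝ + L * pnorm p (-(c • v)) ^ 2 ≤ -(c * G) + L * c ^ 2 := by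
    rw [inner_neg_right, real_inner_smul_right, hv_inner, pnorm_neg, pnorm_smul hpq.pos,
      abs_of_nonneg hc]
    have : pnorm p v ^ 2 ≤ 1 := pow_le_one₀ (pnorm_nonneg _ _) hv_le
    nlinarith [mul_le_mul_of_nonneg_left this (by positivity : 0 ≤ L * c ^ 2)]
  have hsq : L * (r - c) ^ 2 ≤ 0 := by
    have hexpand : L * (r - c) ^ 2 = L * r ^ 2 - G * r + c * G - L * c ^ 2 := by rw [hGc]; ring
    linarith [hmin (-(c • v))]
  have hrc : r = c :=
    sub_eq_zero.1 (pow_eq_zero_iff two_ne_zero |>.1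
      (le_antisymm (nonpos_of_mul_nonpos_right hsq hL) (sq_nonneg _)))
  rw [hGc, hrc]

end Pnorm

theorem stmt2_general {d : ℕ} (p L : ℝ) (hp : 2 ≤ p) (hL : 0 < L)
    (f : EuclideanSpace ℝ (Fin d) → ℝ)
    (hsmooth : ∀ x y : EuclideanSpace ℝ (Fin d),
      pnorm (dualExp p) (gradient f y - gradient f x) ≤ L * pnorm p (y - x))
    (y xp : EuclideanSpace ℝ (Fin d))
    (hxp : ∀ x : EuclideanSpace ℝ (Fin d),
      ⟪gradient f y, xp - y⟫_ℝ + L * pnorm p (xp - y) ^ 2 ≤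
      ⟪gradient f y, x - y⟫_ℝ + L * pnorm p (x - y) ^ 2) :
    pnorm (dualExp p) (gradient f xp) ≤ 3 * L * pnorm p (xp - y) ∧
    L * pnorm p (xp - y) ^ 2 ≥ (1 / (9 * L)) * pnorm (dualExp p) (gradient f xp) ^ 2 := by
  have hpq := holderConjugate_dualExp (by linarith : 1 < p)
  have hgrad_y : pnorm (dualExp p) (gradient f y) = 2 * L * pnorm p (xp - y) :=
    pnorm_eq_two_mul_pnorm_of_isMinimizer hpq hL fun z => by
      simpa using hxp (z + y)
  have hbound : pnorm (dualExp p) (gradient f xp) ≤ 3 * L * pnorm p (xp - y) :=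
    calc pnorm (dualExp p) (gradient f xp)
        = pnorm (dualExp p) (gradient f xp - gradient f y + gradient f y) := by
          rw [sub_add_cancel]
      _ ≤ pnorm (dualExp p) (gradient f xp - gradient f y) + pnorm (dualExp p) (gradient f y) :=
          pnorm_add_le hpq.symm.lt.le _ _
      _ ≤ L * pnorm p (xp - y) + 2 * L * pnorm p (xp - y) := by
          rw [hgrad_y]; gcongr; exact hsmooth y xp
      _ = 3 * L * pnorm p (xp - y) := by ring
  refine ⟨hbound, ?_⟩
  rw [ge_iff_le, one_div_mul_eq_div, div_le_iff₀ (by positivity)]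
  nlinarith [mul_self_le_mul_self (pnorm_nonneg _ _) hbound]

theorem stmt2 {d : ℕ} (p L : ℝ) (hp : 2 ≤ p) (hL : 0 < L)
    (f : EuclideanSpace ℝ (Fin d) → ℝ) (hf : Differentiable ℝ f)
    (hsmooth : ∀ x y : EuclideanSpace ℝ (Fin d),
      pnorm (dualExp p) (gradient f y - gradient f x) ≤ L * pnorm p (y - x))
    (y xp : EuclideanSpace ℝ (Fin d))
    (hxp : ∀ x : EuclideanSpace ℝ (Fin d),
      ⟪gradient f y, xp - y⟫_ℝ + L * pnorm p (xp - y) ^ 2 ≤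
      ⟪gradient f y, x - y⟫_ℝ + L * pnorm p (x - y) ^ 2) :
    pnorm (dualExp p) (gradient f xp) ≤ 3 * L * pnorm p (xp - y) ∧
    L * pnorm p (xp - y) ^ 2 ≥ (1 / (9 * L)) * pnorm (dualExp p) (gradient f xp) ^ 2 :=
  stmt2_general p L hp hL f hsmooth y xp hxp
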